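/- arXiv:2007.03463 — 3 statements merged into one kernel-verified Lean document; each statement's English description precedes it below -/
import Mathlib

section
/- For compacta X₁,…,Xₙ and a continuous t-norm ∗, the n-fold tensor product map ⊛̃ : MX₁ × … × MXₙ → M(X₁ × … × Xₙ) generated by ∗ is continuous. -/
open Set TopologicalSpace

universe u v

/-- A (upper-semicontinuous) capacity on a topological space `X`:
a normalized monotone set function on the closed subsets, upper semicontinuous
in the sense of Zarichnyi–Nykyforchyn. -/
structure Capacity (X : Type u) [TopologicalSpace X] : Type u where
  toFun : Closeds X → ℝ
  empty' : toFun ⊥ = 0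
  univ' : toFun ⊤ = 1
  mono' : ∀ F G : Closeds X, F ≤ G → toFun F ≤ toFun G
  usc' : ∀ (F : Closeds X) (a : ℝ), toFun F < a →
    ∃ O : Set X, IsOpen O ∧ (F : Set X) ⊆ O ∧ ∀ B : Closeds X, (B : Set X) ⊆ O → toFun B < a

namespace Capacity

variable {X : Type u} [TopologicalSpace X]

/-- Value of a capacity on (the closure of) an arbitrary set; on closed sets this is
the value of the capacity. -/
def cval (ν : Capacity X) (A : Set X) : ℝ := ν.toFun ⟨closure A, isClosed_closure⟩

/-- The sup-extension of a capacity to open sets: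
`ν(U) = sup {ν K : K closed, K ⊆ U}`. -/
noncomputable def oval (ν : Capacity X) (U : Set X) : ℝ :=
  sSup {r : ℝ | ∃ K : Closeds X, (K : Set X) ⊆ U ∧ ν.toFun K = r}

end Capacity

/-- The topology on the space `MX` of capacities, generated by the subbase
`O₋(F,a) = {c : c(F) < a}` (`F` closed) and `O₊(U,a) = {c : c(U) > a}` (`U` open). -/
instance capacityTopology (X : Type u) [TopologicalSpace X] : TopologicalSpace (Capacity X) :=
  TopologicalSpace.generateFrom
    ({S | ∃ (F : Closeds X) (a : ℝ), a ∈ Icc (0:ℝ) 1 ∧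
        S = {c : Capacity X | c.toFun F < a}} ∪
     {S | ∃ U : Set X, IsOpen U ∧ ∃ a ∈ Icc (0:ℝ) 1,
        S = {c : Capacity X | a < c.oval U}})

/-- A possibility capacity: `ν(A ∪ B) = max (ν A) (ν B)` on closed sets. -/
def IsPossibility {X : Type u} [TopologicalSpace X] (ν : Capacity X) : Prop :=
  ∀ A B : Closeds X, ν.toFun (A ⊔ B) = max (ν.toFun A) (ν.toFun B)

/-- A necessity capacity: `ν(A ∩ B) = min (ν A) (ν B)` on closed sets. -/
def IsNecessity {X : Type u} [TopologicalSpace X] (ν : Capacity X) : Prop :=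
  ∀ A B : Closeds X, ν.toFun (A ⊓ B) = min (ν.toFun A) (ν.toFun B)

/-- A triangular norm on `[0,1]`. -/
structure Tnorm : Type where
  toFun : ℝ → ℝ → ℝ
  mem' : ∀ s ∈ Icc (0:ℝ) 1, ∀ t ∈ Icc (0:ℝ) 1, toFun s t ∈ Icc (0:ℝ) 1
  comm' : ∀ s ∈ Icc (0:ℝ) 1, ∀ t ∈ Icc (0:ℝ) 1, toFun s t = toFun t s
  assoc' : ∀ s ∈ Icc (0:ℝ) 1, ∀ t ∈ Icc (0:ℝ) 1, ∀ r ∈ Icc (0:ℝ) 1,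
    toFun (toFun s t) r = toFun s (toFun t r)
  mono' : ∀ s₁ ∈ Icc (0:ℝ) 1, ∀ s₂ ∈ Icc (0:ℝ) 1, ∀ t₁ ∈ Icc (0:ℝ) 1, ∀ t₂ ∈ Icc (0:ℝ) 1,
    s₁ ≤ s₂ → t₁ ≤ t₂ → toFun s₁ t₁ ≤ toFun s₂ t₂
  one' : ∀ s ∈ Icc (0:ℝ) 1, toFun s 1 = s

/-- Continuity of a t-norm (on the unit square). -/
def Tnorm.Cont (star : Tnorm) : Prop :=
  ContinuousOn (fun q : ℝ × ℝ => star.toFun q.1 q.2) (Icc 0 1 ×ˢ Icc 0 1)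

/-- The t-normed (fuzzy) integral `∫^{∨∗} f dν = sup { ν(f⁻¹[t,1]) ∗ t : t ∈ [0,1] }`. -/
noncomputable def tInt {X : Type u} [TopologicalSpace X] (star : Tnorm) (ν : Capacity X) (f : X → ℝ) : ℝ :=
  sSup {r : ℝ | ∃ t ∈ Icc (0:ℝ) 1, r = star.toFun (ν.cval (f ⁻¹' Icc t 1)) t}
/-- Value of the binary tensor product generated by a t-norm `∗`:
`μ₁ ⊛̃ μ₂(B) = sup { μ₁({x : μ₂({y : (x,y) ∈ B}) ≥ t}) ∗ t : t ∈ [0,1] }`. -/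
noncomputable def tensorVal₂ {X : Type u} {Y : Type v} [TopologicalSpace X] [TopologicalSpace Y]
    (ast : Tnorm) (μ₁ : Capacity X) (μ₂ : Capacity Y) (B : Set (X × Y)) : ℝ :=
  sSup {r : ℝ | ∃ t ∈ Icc (0:ℝ) 1,
    r = ast.toFun (μ₁.cval {x : X | t ≤ μ₂.cval {y : Y | (x, y) ∈ B}}) t}

/-- `IsTensorRec ast μ τ` says that `τ` is the `m`-fold tensor product (generated by
the t-norm `ast`) of the capacities `μ j`, defined by iteration of the binary tensor
product, splitting off the first coordinate at each step. -/
def IsTensorRec (ast : Tnorm) : ∀ {m : ℕ} {X : Fin m → Type u}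
    [inst : ∀ j, TopologicalSpace (X j)],
    (∀ j, Capacity (X j)) → Capacity (∀ j, X j) → Prop
  | 0, _, _, _, _ => True
  | (m+1), X, inst, μ, τ =>
    letI := inst
    ∃ σ : Capacity (∀ k : Fin m, X ((0 : Fin (m+1)).succAbove k)),
      IsTensorRec ast (fun k => μ ((0 : Fin (m+1)).succAbove k)) σ ∧
      ∀ B : Set (∀ j, X j), IsClosed B →
        τ.cval B = tensorVal₂ ast (μ 0) σ
          ((fun z : ∀ j, X j =>
            ((z 0 : X 0), fun k : Fin m => z ((0 : Fin (m+1)).succAbove k))) '' B)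

/-!
By induction on the number of factors, splitting off the first coordinate, it suffices to show that
`(μ₁, μ₂) ↦ μ₁ ⊛̃ μ₂` is continuous, i.e. that `{μ₁ ⊛̃ μ₂(B) < a}` is open for closed `B` and
`{μ₁ ⊛̃ μ₂(U) > a}` is open for open `U`.

The first set is open because the level sets `{x : μ₂(B_x) ≥ t}` are closed and depend upper
semicontinuously on `μ₂`, while uniform continuity of `∗` reduces the supremum over `t` to finitely
many levels. For the second, a witness `μ₁(K) ∗ t > a` is covered, by the tube lemma, by finitely many
open boxes `N × W ⊆ U` with `μ₂(W) > t`; capacities close to `μ₁, μ₂` still charge the union of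
the bases and each fibre `W`, and from closed subsets of these one rebuilds a closed subset of `U`
with tensor value above `a`.
-/

open Filter Topology

namespace Capacity

variable {X : Type u} [TopologicalSpace X] (ν : Capacity X)

theorem toFun_nonneg (F : Closeds X) : 0 ≤ ν.toFun F :=
  ν.empty' ▸ ν.mono' ⊥ F bot_le

theorem toFun_le_one (F : Closeds X) : ν.toFun F ≤ 1 :=
  ν.univ' ▸ ν.mono' F ⊤ le_top

theorem cval_mem_Icc (A : Set X) : ν.cval A ∈ Icc (0 : ℝ) 1 :=
  ⟨ν.toFun_nonneg _, ν.toFun_le_one _⟩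

theorem cval_mono {A B : Set X} (h : A ⊆ B) : ν.cval A ≤ ν.cval B :=
  ν.mono' _ _ (closure_mono h)

theorem cval_coe (F : Closeds X) : ν.cval F = ν.toFun F :=
  congrArg ν.toFun (Closeds.ext F.isClosed.closure_eq)

theorem cval_of_isClosed {F : Set X} (hF : IsClosed F) : ν.cval F = ν.toFun ⟨F, hF⟩ :=
  ν.cval_coe ⟨F, hF⟩

theorem cval_le_toFun {A : Set X} {F : Closeds X} (h : A ⊆ F) : ν.cval A ≤ ν.toFun F :=
  (ν.cval_mono h).trans_eq (ν.cval_coe F)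

theorem bddAbove_ovalSet (U : Set X) :
    BddAbove {r : ℝ | ∃ K : Closeds X, (K : Set X) ⊆ U ∧ ν.toFun K = r} :=
  ⟨1, by rintro _ ⟨K, -, rfl⟩; exact ν.toFun_le_one K⟩

theorem toFun_le_oval {U : Set X} {K : Closeds X} (h : (K : Set X) ⊆ U) :
    ν.toFun K ≤ ν.oval U :=
  le_csSup (ν.bddAbove_ovalSet U) ⟨K, h, rfl⟩

theorem oval_mem_Icc (U : Set X) : ν.oval U ∈ Icc (0 : ℝ) 1 :=
  ⟨ν.empty' ▸ ν.toFun_le_oval (empty_subset U),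
    csSup_le ⟨_, ⊥, empty_subset U, rfl⟩ (by rintro _ ⟨K, -, rfl⟩; exact ν.toFun_le_one K)⟩

theorem lt_oval_iff {U : Set X} {a : ℝ} :
    a < ν.oval U ↔ ∃ K : Closeds X, (K : Set X) ⊆ U ∧ a < ν.toFun K := by
  rw [oval, lt_csSup_iff (ν.bddAbove_ovalSet U) ⟨_, ⊥, empty_subset U, rfl⟩]
  constructor
  · rintro ⟨_, ⟨K, hK, rfl⟩, h⟩
    exact ⟨K, hK, h⟩
  · rintro ⟨K, hK, h⟩
    exact ⟨_, ⟨K, hK, rfl⟩, h⟩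

theorem ext {ν ν' : Capacity X} (h : ∀ F, ν.toFun F = ν'.toFun F) : ν = ν' := by
  obtain ⟨f, _⟩ := ν
  obtain ⟨g, _⟩ := ν'
  obtain rfl : f = g := funext h
  rfl

instance [Subsingleton X] : Subsingleton (Capacity X) :=
  ⟨fun ν ν' => ext fun F => by
    rcases (F : Set X).eq_empty_or_nonempty with hF | ⟨x, hx⟩
    · rw [show F = ⊥ from Closeds.ext hF, ν.empty', ν'.empty']
    · rw [show F = ⊤ from Closeds.ext (eq_univ_of_forall fun y => Subsingleton.elim x y ▸ hx),
        ν.univ', ν'.univ']⟩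

theorem isOpen_setOf_toFun_lt (F : Closeds X) (a : ℝ) :
    IsOpen {c : Capacity X | c.toFun F < a} := by
  rcases le_or_gt a 0 with ha | ha
  · convert isOpen_empty
    exact eq_empty_of_forall_notMem fun c hc => (ha.trans (c.toFun_nonneg F)).not_gt hc
  rcases le_or_gt a 1 with ha₁ | ha₁
  · exact isOpen_generateFrom_of_mem (Or.inl ⟨F, a, ⟨ha.le, ha₁⟩, rfl⟩)
  · convert isOpen_univ
    exact eq_univ_of_forall fun c => (c.toFun_le_one F).trans_lt ha₁

theorem isOpen_setOf_lt_oval {U : Set X} (hU : IsOpen U) (a : ℝ) :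
    IsOpen {c : Capacity X | a < c.oval U} := by
  rcases lt_or_ge a 0 with ha | ha
  · convert isOpen_univ
    exact eq_univ_of_forall fun c => ha.trans_le (c.oval_mem_Icc U).1
  rcases le_or_gt a 1 with ha₁ | ha₁
  · exact isOpen_generateFrom_of_mem (Or.inr ⟨U, hU, a, ⟨ha, ha₁⟩, rfl⟩)
  · convert isOpen_empty
    exact eq_empty_of_forall_notMem fun c hc => ((c.oval_mem_Icc U).2.trans ha₁.le).not_gt hc

end Capacity

namespace Tnorm

variable (ast : Tnorm)

theorem zero_left {t : ℝ} (ht : t ∈ Icc (0 : ℝ) 1) : ast.toFun 0 t = 0 :=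
  le_antisymm
    ((ast.mono' 0 ⟨le_rfl, zero_le_one⟩ 0 ⟨le_rfl, zero_le_one⟩ t ht 1 ⟨zero_le_one, le_rfl⟩
      le_rfl ht.2).trans_eq (ast.one' 0 ⟨le_rfl, zero_le_one⟩))
    (ast.mem' 0 ⟨le_rfl, zero_le_one⟩ t ht).1

theorem zero_right {s : ℝ} (hs : s ∈ Icc (0 : ℝ) 1) : ast.toFun s 0 = 0 := by
  rw [ast.comm' s hs 0 ⟨le_rfl, zero_le_one⟩, ast.zero_left hs]

variable {ast}

theorem Cont.exists_pos_toFun_lt_add (hast : ast.Cont) {ε : ℝ} (hε : 0 < ε) :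
    ∃ η > 0, ∀ s ∈ Icc (0 : ℝ) 1, ∀ t ∈ Icc (0 : ℝ) 1, ∀ s' ∈ Icc (0 : ℝ) 1,
      ∀ t' ∈ Icc (0 : ℝ) 1, s' ≤ s + η → t' ≤ t + η → ast.toFun s' t' < ast.toFun s t + ε := by
  obtain ⟨δ, hδ, hδε⟩ := Metric.uniformContinuousOn_iff.1
    ((isCompact_Icc.prod isCompact_Icc).uniformContinuousOn_of_continuous hast) ε hε
  refine ⟨δ / 2, half_pos hδ, fun s hs t ht s' hs' t' ht' hss' htt' => ?_⟩
  -- raise `(s', t')` to `(max s s', max t t')`, which is `δ/2`-close to `(s, t)`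
  have hmax : (max s s', max t t') ∈ Icc (0 : ℝ) 1 ×ˢ Icc (0 : ℝ) 1 :=
    ⟨⟨hs.1.trans (le_max_left _ _), max_le hs.2 hs'.2⟩,
      ⟨ht.1.trans (le_max_left _ _), max_le ht.2 ht'.2⟩⟩
  have hdist : dist (max s s', max t t') (s, t) < δ := by
    rw [Prod.dist_eq, Real.dist_eq, Real.dist_eq, abs_of_nonneg (by simp), abs_of_nonneg (by simp)]
    exact max_lt (by linarith [max_le (by linarith : s ≤ s + δ / 2) hss'])
      (by linarith [max_le (by linarith : t ≤ t + δ / 2) htt'])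
  have hclose := hδε _ hmax _ ⟨hs, ht⟩ hdist
  rw [Real.dist_eq, abs_lt] at hclose
  calc ast.toFun s' t' ≤ ast.toFun (max s s') (max t t') :=
        ast.mono' _ hs' _ hmax.1 _ ht' _ hmax.2 (le_max_right _ _) (le_max_right _ _)
    _ < ast.toFun s t + ε := by linarith [hclose.2]

theorem Cont.exists_lt_toFun_of_lt (hast : ast.Cont) {a s t : ℝ} (ha : 0 ≤ a)
    (hs : s ∈ Icc (0 : ℝ) 1) (ht : t ∈ Icc (0 : ℝ) 1) (hst : a < ast.toFun s t) :
    ∃ s' ∈ Icc (0 : ℝ) 1, s' < s ∧ ∃ t' ∈ Icc (0 : ℝ) 1, t' < t ∧ a < ast.toFun s' t' := by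
  have hs₀ : 0 < s := hs.1.lt_of_ne (by rintro rfl; rw [ast.zero_left ht] at hst; linarith)
  have ht₀ : 0 < t := ht.1.lt_of_ne (by rintro rfl; rw [ast.zero_right hs] at hst; linarith)
  obtain ⟨η, hη, hmod⟩ := hast.exists_pos_toFun_lt_add (sub_pos.2 hst)
  have hs' : max (s - η) 0 ∈ Icc (0 : ℝ) 1 := ⟨le_max_right _ _, max_le (by linarith [hs.2]) zero_le_one⟩
  have ht' : max (t - η) 0 ∈ Icc (0 : ℝ) 1 := ⟨le_max_right _ _, max_le (by linarith [ht.2]) zero_le_one⟩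
  refine ⟨_, hs', max_lt (by linarith) hs₀, _, ht', max_lt (by linarith) ht₀, ?_⟩
  have := hmod _ hs' _ ht' s hs t ht (by linarith [le_max_left (s - η) 0])
    (by linarith [le_max_left (t - η) 0])
  linarith

end Tnorm

theorem exists_finset_forall_le_le_add {η : ℝ} (hη : 0 < η) :
    ∃ S : Finset ℝ, (∀ r ∈ S, r ∈ Icc (0 : ℝ) 1) ∧
      ∀ t ∈ Icc (0 : ℝ) 1, ∃ r ∈ S, r ≤ t ∧ t ≤ r + η := by
  refine ⟨(Finset.range (⌊η⁻¹⌋₊ + 1)).image (fun i : ℕ => i * η), ?_, fun t ht => ?_⟩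
  · simp only [Finset.mem_image, Finset.mem_range, Nat.lt_succ_iff]
    rintro _ ⟨i, hi, rfl⟩
    have : (i : ℝ) ≤ η⁻¹ := (Nat.cast_le.2 hi).trans (Nat.floor_le (inv_nonneg.2 hη.le))
    exact ⟨by positivity, by rwa [← le_div_iff₀ hη, one_div]⟩
  · have hi : ⌊t / η⌋₊ ≤ ⌊η⁻¹⌋₊ :=
      Nat.floor_le_floor (by rw [div_eq_mul_inv]; exact mul_le_of_le_one_left (by positivity) ht.2)
    refine ⟨⌊t / η⌋₊ * η, Finset.mem_image_of_mem _ (Finset.mem_range.2 (Nat.lt_succ_of_le hi)),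
      (le_div_iff₀ hη).1 (Nat.floor_le (div_nonneg ht.1 hη.le)), ?_⟩
    have := (div_lt_iff₀ hη).1 (Nat.lt_floor_add_one (t / η))
    linarith

def Capacity.sliceSuperlevel {X : Type u} {Y : Type v} [TopologicalSpace Y] (ν : Capacity Y)
    (D : Set (X × Y)) (t : ℝ) : Set X :=
  {x | t ≤ ν.cval (Prod.mk x ⁻¹' D)}

theorem Capacity.sliceSuperlevel_anti {X : Type u} {Y : Type v} [TopologicalSpace Y]
    (ν : Capacity Y) (D : Set (X × Y)) {t t' : ℝ} (h : t ≤ t') :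
    ν.sliceSuperlevel D t' ⊆ ν.sliceSuperlevel D t :=
  fun _ hx => h.trans hx

section Slices

variable {X : Type u} {Y : Type v} [TopologicalSpace X] [TopologicalSpace Y]

theorem isOpen_setOf_preimage_prodMk_subset [CompactSpace Y] {D : Set (X × Y)} (hD : IsClosed D)
    {O : Set Y} (hO : IsOpen O) : IsOpen {x : X | Prod.mk x ⁻¹' D ⊆ O} := by
  refine isOpen_iff_eventually.2 fun x hx => ?_
  have := hO.isClosed_compl.isCompact.eventually_forall_of_forall_eventually
    (P := fun z y => (z, y) ∉ D) fun y hy => hD.isOpen_compl.eventually_mem fun h => hy (hx h)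
  exact this.mono fun z hz y hy => by_contra fun hyO => hz y hyO hy

theorem eventually_cval_preimage_prodMk_lt [CompactSpace Y] [T2Space Y] {D : Set (X × Y)}
    (hD : IsClosed D) {ν : Capacity Y} {x : X} {t : ℝ} (h : ν.cval (Prod.mk x ⁻¹' D) < t) :
    ∀ᶠ p : Capacity Y × X in 𝓝 (ν, x), p.1.cval (Prod.mk p.2 ⁻¹' D) < t := by
  have hDx : IsClosed (Prod.mk x ⁻¹' D) := hD.preimage (Continuous.prodMk_right x)
  rw [ν.cval_of_isClosed hDx] at h
  obtain ⟨O, hO, hDxO, hOt⟩ := ν.usc' _ t h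
  obtain ⟨W, hW, hDxW, hWO⟩ := normal_exists_closure_subset hDx hO hDxO
  have hν := (Capacity.isOpen_setOf_toFun_lt ⟨closure W, isClosed_closure⟩ t).eventually_mem
    (hOt _ hWO)
  have hx := (isOpen_setOf_preimage_prodMk_subset hD hW).eventually_mem hDxW
  rw [nhds_prod_eq]
  filter_upwards [hν.prod_mk hx] with p ⟨hp₁, hp₂⟩
  exact (p.1.cval_le_toFun (hp₂.trans subset_closure)).trans_lt hp₁

theorem Capacity.isClosed_sliceSuperlevel [CompactSpace Y] [T2Space Y] (ν : Capacity Y)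
    {D : Set (X × Y)} (hD : IsClosed D) (t : ℝ) : IsClosed (ν.sliceSuperlevel D t) := by
  refine isOpen_compl_iff.1 (isOpen_iff_eventually.2 fun x hx => ?_)
  exact ((Continuous.prodMk_right ν).tendsto x).eventually
    (eventually_cval_preimage_prodMk_lt hD (not_le.1 hx)) |>.mono fun _ => not_le.2

theorem isOpen_setOf_sliceSuperlevel_subset [CompactSpace X] [CompactSpace Y] [T2Space Y]
    {D : Set (X × Y)} (hD : IsClosed D) (t : ℝ) {W : Set X} (hW : IsOpen W) :
    IsOpen {ν : Capacity Y | ν.sliceSuperlevel D t ⊆ W} := by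
  refine isOpen_iff_eventually.2 fun ν hν => ?_
  have := hW.isClosed_compl.isCompact.eventually_forall_of_forall_eventually
    (P := fun (ν' : Capacity Y) (x : X) => ν'.cval (Prod.mk x ⁻¹' D) < t)
    fun x hx => eventually_cval_preimage_prodMk_lt hD (not_le.1 fun h => hx (hν h))
  exact this.mono fun ν' h x hx => by_contra fun hxW => (h x hxW).not_ge hx

theorem isOpen_setOf_cval_sliceSuperlevel_lt [CompactSpace X] [T2Space X] [CompactSpace Y]
    [T2Space Y] {D : Set (X × Y)} (hD : IsClosed D) (t b : ℝ) :
    IsOpen {p : Capacity X × Capacity Y | p.1.cval (p.2.sliceSuperlevel D t) < b} := by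
  refine isOpen_iff_eventually.2 ?_
  rintro ⟨ν₁, ν₂⟩ (h : ν₁.cval (ν₂.sliceSuperlevel D t) < b)
  have hG := ν₂.isClosed_sliceSuperlevel hD t
  rw [ν₁.cval_of_isClosed hG] at h
  obtain ⟨O, hO, hGO, hOb⟩ := ν₁.usc' _ b h
  obtain ⟨W, hW, hGW, hWO⟩ := normal_exists_closure_subset hG hO hGO
  have hν₁ := (Capacity.isOpen_setOf_toFun_lt ⟨closure W, isClosed_closure⟩ b).eventually_mem
    (hOb _ hWO)
  have hν₂ := (isOpen_setOf_sliceSuperlevel_subset hD t hW).eventually_mem hGW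
  rw [nhds_prod_eq]
  filter_upwards [hν₁.prod_mk hν₂] with p ⟨hp₁, hp₂⟩
  exact (p.1.cval_le_toFun (hp₂.trans subset_closure)).trans_lt hp₁

end Slices

section TensorValue

variable {X : Type u} {Y : Type v} [TopologicalSpace X] [TopologicalSpace Y] (ast : Tnorm)
  (μ₁ : Capacity X) (μ₂ : Capacity Y) (B : Set (X × Y))

theorem tensorVal₂_eq_sSup : tensorVal₂ ast μ₁ μ₂ B = sSup {r : ℝ | ∃ t ∈ Icc (0 : ℝ) 1,
    r = ast.toFun (μ₁.cval (μ₂.sliceSuperlevel B t)) t} := rfl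

theorem nonempty_tensorValSet : {r : ℝ | ∃ t ∈ Icc (0 : ℝ) 1,
    r = ast.toFun (μ₁.cval (μ₂.sliceSuperlevel B t)) t}.Nonempty :=
  ⟨_, 0, ⟨le_rfl, zero_le_one⟩, rfl⟩

theorem bddAbove_tensorValSet : BddAbove {r : ℝ | ∃ t ∈ Icc (0 : ℝ) 1,
    r = ast.toFun (μ₁.cval (μ₂.sliceSuperlevel B t)) t} :=
  ⟨1, by rintro _ ⟨t, ht, rfl⟩; exact (ast.mem' _ (μ₁.cval_mem_Icc _) t ht).2⟩

theorem le_tensorVal₂ {t : ℝ} (ht : t ∈ Icc (0 : ℝ) 1) :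
    ast.toFun (μ₁.cval (μ₂.sliceSuperlevel B t)) t ≤ tensorVal₂ ast μ₁ μ₂ B :=
  le_csSup (bddAbove_tensorValSet ast μ₁ μ₂ B) ⟨t, ht, rfl⟩

theorem tensorVal₂_nonneg : 0 ≤ tensorVal₂ ast μ₁ μ₂ B :=
  (ast.zero_right (μ₁.cval_mem_Icc _)).symm.trans_le
    (le_tensorVal₂ ast μ₁ μ₂ B ⟨le_rfl, zero_le_one⟩)

variable {ast μ₁ μ₂ B}

theorem tensorVal₂_le {b : ℝ}
    (h : ∀ t ∈ Icc (0 : ℝ) 1, ast.toFun (μ₁.cval (μ₂.sliceSuperlevel B t)) t ≤ b) :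
    tensorVal₂ ast μ₁ μ₂ B ≤ b :=
  csSup_le (nonempty_tensorValSet ast μ₁ μ₂ B) (by rintro _ ⟨t, ht, rfl⟩; exact h t ht)

theorem exists_lt_of_lt_tensorVal₂ {a : ℝ} (h : a < tensorVal₂ ast μ₁ μ₂ B) :
    ∃ t ∈ Icc (0 : ℝ) 1, a < ast.toFun (μ₁.cval (μ₂.sliceSuperlevel B t)) t := by
  rw [tensorVal₂_eq_sSup] at h
  obtain ⟨_, ⟨t, ht, rfl⟩, hlt⟩ := exists_lt_of_lt_csSup (nonempty_tensorValSet ast μ₁ μ₂ B) h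
  exact ⟨t, ht, hlt⟩

end TensorValue

section Continuity

variable {X : Type u} {Y : Type v} [TopologicalSpace X] [TopologicalSpace Y]
  [CompactSpace X] [T2Space X] [CompactSpace Y] [T2Space Y] {ast : Tnorm}

theorem isOpen_setOf_tensorVal₂_lt (hast : ast.Cont) {D : Set (X × Y)} (hD : IsClosed D)
    (a : ℝ) : IsOpen {p : Capacity X × Capacity Y | tensorVal₂ ast p.1 p.2 D < a} := by
  refine isOpen_iff_eventually.2 fun p (hp : tensorVal₂ ast p.1 p.2 D < a) => ?_
  set ε := (a - tensorVal₂ ast p.1 p.2 D) / 2 with hε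
  obtain ⟨η, hη, hmod⟩ := hast.exists_pos_toFun_lt_add (half_pos (sub_pos.2 hp))
  obtain ⟨S, hS, hgrid⟩ := exists_finset_forall_le_le_add hη
  have hnear : ∀ r ∈ S, ∀ᶠ q in 𝓝 p, q.1.cval (q.2.sliceSuperlevel D r) <
      p.1.cval (p.2.sliceSuperlevel D r) + η := fun r _ =>
    (isOpen_setOf_cval_sliceSuperlevel_lt hD r _).eventually_mem (lt_add_of_pos_right _ hη)
  filter_upwards [(Filter.eventually_all_finset S).2 hnear] with q hq
  refine (tensorVal₂_le fun t ht => ?_).trans_lt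
    (by linarith : tensorVal₂ ast p.1 p.2 D + ε < a)
  -- compare level `t` with the grid level `r ≤ t` just below it
  obtain ⟨r, hrS, hrt, htr⟩ := hgrid t ht
  have hcut : q.1.cval (q.2.sliceSuperlevel D t) ≤ p.1.cval (p.2.sliceSuperlevel D r) + η :=
    ((q.1.cval_mono (q.2.sliceSuperlevel_anti D hrt)).trans_lt (hq r hrS)).le
  calc ast.toFun (q.1.cval (q.2.sliceSuperlevel D t)) t
      ≤ ast.toFun (p.1.cval (p.2.sliceSuperlevel D r)) r + ε :=
        (hmod _ (p.1.cval_mem_Icc _) r (hS r hrS) _ (q.1.cval_mem_Icc _) t ht hcut htr).le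
    _ ≤ tensorVal₂ ast p.1 p.2 D + ε := by
        gcongr
        exact le_tensorVal₂ ast p.1 p.2 D (hS r hrS)

omit [CompactSpace Y] [T2Space Y] in
theorem exists_le_tensorVal₂_of_lt_oval {ι : Type*} (ast : Tnorm) (ν₁ : Capacity X)
    (ν₂ : Capacity Y) (S : Finset ι) {N : ι → Set X} {W : ι → Set Y}
    (hN : ∀ i ∈ S, IsOpen (N i)) {s t : ℝ} (hs : s ∈ Icc (0 : ℝ) 1) (ht : t ∈ Icc (0 : ℝ) 1)
    (hν₁ : s < ν₁.oval (⋃ i ∈ S, N i)) (hν₂ : ∀ i ∈ S, t < ν₂.oval (W i)) :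
    ∃ D, IsClosed D ∧ D ⊆ ⋃ i ∈ S, N i ×ˢ W i ∧ ast.toFun s t ≤ tensorVal₂ ast ν₁ ν₂ D := by
  obtain ⟨K, hKN, hK⟩ := ν₁.lt_oval_iff.1 hν₁
  obtain ⟨M, hMc, hMN, hKM⟩ := K.isClosed.isCompact.finite_compact_cover S N hN hKN
  choose! L hLW hL using fun i hi => ν₂.lt_oval_iff.1 (hν₂ i hi)
  refine ⟨⋃ i ∈ S, M i ×ˢ L i,
    S.finite_toSet.isClosed_biUnion fun i _ => (hMc i).isClosed.prod (L i).isClosed,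
    iUnion₂_mono fun i hi => prod_mono (hMN i) (hLW i hi), ?_⟩
  have hK_sub : (K : Set X) ⊆ ν₂.sliceSuperlevel (⋃ i ∈ S, M i ×ˢ L i) t := by
    rw [hKM]
    refine iUnion₂_subset fun i hi z hz => (hL i hi).le.trans ?_
    exact (ν₂.cval_coe (L i)).symm.trans_le
      (ν₂.cval_mono fun y hy => mem_iUnion₂.2 ⟨i, hi, hz, hy⟩)
  have hs_le : s ≤ ν₁.cval (ν₂.sliceSuperlevel (⋃ i ∈ S, M i ×ˢ L i) t) :=
    hK.le.trans ((ν₁.cval_coe K).symm.trans_le (ν₁.cval_mono hK_sub))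
  exact (ast.mono' _ hs _ (ν₁.cval_mem_Icc _) _ ht _ ht hs_le le_rfl).trans
    (le_tensorVal₂ ast ν₁ ν₂ _ ht)

omit [T2Space X] in
theorem exists_finset_boxes_cover_sliceSuperlevel (ν : Capacity Y) {D O : Set (X × Y)}
    (hD : IsClosed D) (hO : IsOpen O) (hDO : D ⊆ O) {t t' : ℝ} (ht' : t' < t) :
    ∃ (S : Finset X) (N : X → Set X) (W : X → Set Y), ν.sliceSuperlevel D t ⊆ ⋃ x ∈ S, N x ∧
      ∀ x ∈ S, IsOpen (N x) ∧ IsOpen (W x) ∧ N x ×ˢ W x ⊆ O ∧ t' < ν.oval (W x) := by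
  have hDx : ∀ x, IsClosed (Prod.mk x ⁻¹' D) := fun x => hD.preimage (Continuous.prodMk_right x)
  have tube : ∀ x, ∃ N W, IsOpen N ∧ IsOpen W ∧ x ∈ N ∧ Prod.mk x ⁻¹' D ⊆ W ∧ N ×ˢ W ⊆ O := by
    intro x
    obtain ⟨N, W, hN, hW, hxN, hDW, hNW⟩ := generalized_tube_lemma isCompact_singleton
      (hDx x).isCompact hO (by rintro ⟨z, y⟩ ⟨rfl, hy⟩; exact hDO hy)
    exact ⟨N, W, hN, hW, hxN rfl, hDW, hNW⟩
  choose N W hN hW hxN hDW hNW using tube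
  obtain ⟨S, hSG, hGS⟩ := (ν.isClosed_sliceSuperlevel hD t).isCompact.elim_nhds_subcover N
    fun x _ => (hN x).mem_nhds (hxN x)
  refine ⟨S, N, W, hGS, fun x hx => ⟨hN x, hW x, hNW x, ?_⟩⟩
  calc t' < t := ht'
    _ ≤ ν.toFun ⟨_, hDx x⟩ := (hSG x hx).trans_eq (ν.cval_of_isClosed (hDx x))
    _ ≤ ν.oval (W x) := ν.toFun_le_oval (hDW x)

theorem isOpen_setOf_exists_lt_tensorVal₂ (hast : ast.Cont) {O : Set (X × Y)} (hO : IsOpen O)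
    (a : ℝ) : IsOpen {p : Capacity X × Capacity Y |
      ∃ D, IsClosed D ∧ D ⊆ O ∧ a < tensorVal₂ ast p.1 p.2 D} := by
  rcases lt_or_ge a 0 with ha | ha
  · convert isOpen_univ
    exact eq_univ_of_forall fun p =>
      ⟨∅, isClosed_empty, empty_subset O, ha.trans_le (tensorVal₂_nonneg ast p.1 p.2 ∅)⟩
  refine isOpen_iff_eventually.2 ?_
  rintro ⟨ν₁, ν₂⟩ ⟨D, hD, hDO, hlt⟩
  obtain ⟨t, ht, hat⟩ := exists_lt_of_lt_tensorVal₂ hlt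
  obtain ⟨s', hs', hs's, t', ht', ht't, hast'⟩ :=
    hast.exists_lt_toFun_of_lt ha (ν₁.cval_mem_Icc _) ht hat
  obtain ⟨S, N, W, hcover, hbox⟩ := exists_finset_boxes_cover_sliceSuperlevel ν₂ hD hO hDO ht't
  have hG := ν₂.isClosed_sliceSuperlevel hD t
  have hν₁ : ∀ᶠ ν₁' in 𝓝 ν₁, s' < ν₁'.oval (⋃ x ∈ S, N x) :=
    (Capacity.isOpen_setOf_lt_oval (isOpen_biUnion fun x hx => (hbox x hx).1) s').eventually_mem
      (hs's.trans_le ((ν₁.cval_of_isClosed hG).trans_le (ν₁.toFun_le_oval hcover)))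
  have hν₂ : ∀ᶠ ν₂' in 𝓝 ν₂, ∀ x ∈ S, t' < ν₂'.oval (W x) :=
    (Filter.eventually_all_finset S).2 fun x hx =>
      (Capacity.isOpen_setOf_lt_oval (hbox x hx).2.1 t').eventually_mem (hbox x hx).2.2.2
  rw [nhds_prod_eq]
  filter_upwards [hν₁.prod_mk hν₂] with q ⟨hq₁, hq₂⟩
  obtain ⟨D', hD', hD'N, hle⟩ := exists_le_tensorVal₂_of_lt_oval ast q.1 q.2 S
    (fun x hx => (hbox x hx).1) hs' ht' hq₁ hq₂
  exact ⟨D', hD', hD'N.trans (iUnion₂_subset fun x hx => (hbox x hx).2.2.1), hast'.trans_le hle⟩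

theorem continuous_of_forall_cval_eq_tensorVal₂ {Z P : Type*} [TopologicalSpace Z]
    [TopologicalSpace P] (hast : ast.Cont) (e : P ≃ₜ X × Y) {f : Z → Capacity X}
    {g : Z → Capacity Y} (hf : Continuous f) (hg : Continuous g) {T : Z → Capacity P}
    (hT : ∀ z B, IsClosed B → (T z).cval B = tensorVal₂ ast (f z) (g z) (e '' B)) :
    Continuous T := by
  have hfg : Continuous fun z => (f z, g z) := hf.prodMk hg
  refine continuous_generateFrom_iff.2 ?_
  rintro _ (⟨F, a, -, rfl⟩ | ⟨U, hU, a, -, rfl⟩)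
  · have hpre : T ⁻¹' {c | c.toFun F < a} =
        (fun z => (f z, g z)) ⁻¹' {p | tensorVal₂ ast p.1 p.2 (e '' F) < a} := by
      ext z
      simp only [mem_preimage, mem_ofPred_eq, ← hT z F F.isClosed, Capacity.cval_coe]
    rw [hpre]
    exact (isOpen_setOf_tensorVal₂_lt hast (e.isClosedMap _ F.isClosed) a).preimage hfg
  · have hpre : T ⁻¹' {c | a < c.oval U} = (fun z => (f z, g z)) ⁻¹'
        {p | ∃ D, IsClosed D ∧ D ⊆ e '' U ∧ a < tensorVal₂ ast p.1 p.2 D} := by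
      ext z
      simp only [mem_preimage, mem_ofPred_eq, Capacity.lt_oval_iff]
      constructor
      · rintro ⟨K, hKU, hK⟩
        exact ⟨e '' K, e.isClosedMap _ K.isClosed, image_mono hKU,
          by rwa [← hT z K K.isClosed, Capacity.cval_coe]⟩
      · rintro ⟨D, hD, hDU, hlt⟩
        have hD' : IsClosed (e ⁻¹' D) := hD.preimage e.continuous
        refine ⟨⟨_, hD'⟩, (preimage_mono hDU).trans (e.preimage_image U).subset, ?_⟩
        rwa [← Capacity.cval_of_isClosed, hT z _ hD', e.image_preimage]
    rw [hpre]
    exact (isOpen_setOf_exists_lt_tensorVal₂ hast (e.isOpenMap U hU) a).preimage hfg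

end Continuity

def Homeomorph.piFinSuccAbove {n : ℕ} (X : Fin (n + 1) → Type*) [∀ i, TopologicalSpace (X i)]
    (p : Fin (n + 1)) : (∀ i, X i) ≃ₜ X p × ∀ i, X (p.succAbove i) where
  toEquiv := (Fin.insertNthEquiv X p).symm
  continuous_toFun := (continuous_apply p).prodMk (continuous_pi fun _ => continuous_apply _)
  continuous_invFun := continuous_fst.finInsertNth p continuous_snd

theorem IsTensorRec.unique {ast : Tnorm} : ∀ {m : ℕ} {X : Fin m → Type u}
    [∀ j, TopologicalSpace (X j)] {μ : ∀ j, Capacity (X j)} {τ τ' : Capacity (∀ j, X j)},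
    IsTensorRec ast μ τ → IsTensorRec ast μ τ' → τ = τ'
  | 0, _, _, _, _, _, _, _ => Subsingleton.elim _ _
  | _ + 1, _, _, _, τ, τ', ⟨σ, hσ, hτ⟩, ⟨_, hσ', hτ'⟩ => by
    obtain rfl := hσ.unique hσ'
    exact Capacity.ext fun F => by
      rw [← τ.cval_coe, ← τ'.cval_coe, hτ F F.isClosed, hτ' F F.isClosed]

/-- For compacta `X₁, …, Xₙ` and a continuous t-norm `∗`, the `n`-fold
tensor product map `⊛̃ : MX₁ × … × MXₙ → M(X₁ × … × Xₙ)` generated by `∗` is continuous. -/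
theorem tensor_product_continuous {m : ℕ} (X : Fin m → Type u)
    [∀ j, TopologicalSpace (X j)] [∀ j, CompactSpace (X j)] [∀ j, T2Space (X j)]
    (ast : Tnorm) (hast : ast.Cont)
    (T : (∀ j, Capacity (X j)) → Capacity (∀ j, X j))
    (hT : ∀ μ : ∀ j, Capacity (X j), IsTensorRec ast μ (T μ)) :
    Continuous T := by
  induction m with
  | zero => exact continuous_of_const fun _ _ => Subsingleton.elim _ _
  | succ m ih =>
    rcases isEmpty_or_nonempty (Capacity (X 0)) with hX₀ | ⟨⟨ν₀⟩⟩
    · exact continuous_of_const fun μ => (hX₀.false (μ 0)).elim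
    -- the tensor product of the last `m` factors, read off from `T` by putting `ν₀` in front
    have tail : ∀ μ' : ∀ k, Capacity (X (Fin.succAbove 0 k)), ∃ σ, IsTensorRec ast μ' σ :=
      fun μ' => (hT (Fin.cons ν₀ μ')).imp fun _ h => h.1
    choose T' hT' using tail
    refine continuous_of_forall_cval_eq_tensorVal₂ hast (Homeomorph.piFinSuccAbove X 0)
      (continuous_apply 0) ((ih _ T' hT').comp (continuous_pi fun k => continuous_apply _))
      fun μ B hB => ?_
    obtain ⟨σ, hσ, hτ⟩ := hT μ
    rw [hτ B hB, hσ.unique (hT' _)]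
    rfl
end

section
/- For every compactum X, each element of the convexity C_{∪X} on the space M_∪X of possibility capacities is path connected. -/
open Set TopologicalSpace

universe u v

/-- The convexity `C_{∪X}` on the space `M_∪X` of possibility capacities: a set `A` of
possibility capacities belongs to it iff it is empty, or it is nonempty, closed and
equals `[⋀A, ⋁A] ∩ M_∪X` (pointwise order interval between the pointwise infimum and
supremum of `A`). -/
def InConvexU {X : Type u} [TopologicalSpace X] (A : Set (Capacity X)) : Prop :=
  A = ∅ ∨ (A.Nonempty ∧ IsClosed A ∧ (∀ ν ∈ A, IsPossibility ν) ∧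
    A = {α : Capacity X | IsPossibility α ∧ ∀ F : Closeds X,
      sInf ((fun ν : Capacity X => ν.toFun F) '' A) ≤ α.toFun F ∧
      α.toFun F ≤ sSup ((fun ν : Capacity X => ν.toFun F) '' A)})
section SegAux

variable {X : Type u} [TopologicalSpace X]

lemma Capacity.nonneg (c : Capacity X) (F : Closeds X) : 0 ≤ c.toFun F := by
  rw [← c.empty']; exact c.mono' ⊥ F bot_le

lemma Capacity.le_one (c : Capacity X) (F : Closeds X) : c.toFun F ≤ 1 := by
  rw [← c.univ']; exact c.mono' F ⊤ le_top

lemma Capacity.ext' {c d : Capacity X} (h : c.toFun = d.toFun) : c = d := by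
  cases c; cases d; simpa using h

/-- The segment capacity `t ↦ ν ∨ (μ ∧ t)`. -/
def seg (ν μ : Capacity X) (t : ℝ) : Capacity X where
  toFun F := max (ν.toFun F) (min (μ.toFun F) t)
  empty' := by
    simp only [ν.empty', μ.empty']
    exact max_eq_left (min_le_left 0 t)
  univ' := by
    simp only [ν.univ', μ.univ']
    exact max_eq_left (min_le_left 1 t)
  mono' := fun F G hFG =>
    max_le_max (ν.mono' F G hFG) (min_le_min (μ.mono' F G hFG) le_rfl)
  usc' := by
    intro F a hlt
    have h1 : ν.toFun F < a := (le_max_left _ _).trans_lt hlt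
    have h2 : min (μ.toFun F) t < a := (le_max_right _ _).trans_lt hlt
    rcases lt_or_ge t a with ht | ht
    · obtain ⟨O, hO, hFO, hB⟩ := ν.usc' F a h1
      exact ⟨O, hO, hFO, fun B hBO =>
        max_lt (hB B hBO) ((min_le_right _ _).trans_lt ht)⟩
    · have hμ : μ.toFun F < a := by
        by_contra h
        push_neg at h
        exact absurd h2 (not_lt.mpr (le_min h ht))
      obtain ⟨O₁, hO₁, hFO₁, hB₁⟩ := ν.usc' F a h1
      obtain ⟨O₂, hO₂, hFO₂, hB₂⟩ := μ.usc' F a hμ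
      refine ⟨O₁ ∩ O₂, hO₁.inter hO₂, subset_inter hFO₁ hFO₂, fun B hBO => ?_⟩
      exact max_lt (hB₁ B (hBO.trans inter_subset_left))
        ((min_le_left _ _).trans_lt (hB₂ B (hBO.trans inter_subset_right)))

lemma seg_toFun (ν μ : Capacity X) (t : ℝ) (F : Closeds X) :
    (seg ν μ t).toFun F = max (ν.toFun F) (min (μ.toFun F) t) := rfl

lemma seg_zero (ν μ : Capacity X) : seg ν μ 0 = ν := by
  refine Capacity.ext' (funext fun F => ?_)
  rw [seg_toFun, min_eq_right (μ.nonneg F), max_eq_left (ν.nonneg F)]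

lemma seg_one_comm (ν μ : Capacity X) : seg ν μ 1 = seg μ ν 1 := by
  refine Capacity.ext' (funext fun F => ?_)
  rw [seg_toFun, seg_toFun, min_eq_left (μ.le_one F), min_eq_left (ν.le_one F), max_comm]

lemma seg_possibility {ν μ : Capacity X} (hν : IsPossibility ν) (hμ : IsPossibility μ)
    (t : ℝ) : IsPossibility (seg ν μ t) := by
  intro F G
  simp only [seg_toFun, hν F G, hμ F G, min_max_distrib_right, max_max_max_comm]

lemma seg_continuous (ν μ : Capacity X) : Continuous (fun t : ℝ => seg ν μ t) := by
  apply continuous_generateFrom_iff.mpr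
  rintro s (⟨F, a, _, rfl⟩ | ⟨U, hU, a, _, rfl⟩)
  · have hc : Continuous (fun t : ℝ => max (ν.toFun F) (min (μ.toFun F) t)) :=
      continuous_const.max (continuous_const.min continuous_id)
    exact isOpen_Iio.preimage hc
  · have key : (fun t : ℝ => seg ν μ t) ⁻¹' {c : Capacity X | a < c.oval U} =
        ⋃ (K : Closeds X) (_ : (K : Set X) ⊆ U),
          {t : ℝ | a < max (ν.toFun K) (min (μ.toFun K) t)} := by
      ext t
      have hbdd : BddAbove {r : ℝ | ∃ K : Closeds X, (K : Set X) ⊆ U ∧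
          (seg ν μ t).toFun K = r} := by
        refine ⟨1, ?_⟩
        rintro r ⟨K, _, rfl⟩
        exact (seg ν μ t).le_one K
      have hne : {r : ℝ | ∃ K : Closeds X, (K : Set X) ⊆ U ∧
          (seg ν μ t).toFun K = r}.Nonempty :=
        ⟨(seg ν μ t).toFun ⊥, ⊥, by simp, rfl⟩
      simp only [mem_preimage, mem_setOf_eq, mem_iUnion, Capacity.oval,
        lt_csSup_iff hbdd hne]
      constructor
      · rintro ⟨r, ⟨K, hK, rfl⟩, hr⟩
        exact ⟨K, hK, hr⟩
      · rintro ⟨K, hK, hr⟩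
        exact ⟨(seg ν μ t).toFun K, ⟨K, hK, rfl⟩, hr⟩
    rw [key]
    refine isOpen_iUnion fun K => isOpen_iUnion fun _ => ?_
    have hc : Continuous (fun t : ℝ => max (ν.toFun K) (min (μ.toFun K) t)) :=
      continuous_const.max (continuous_const.min continuous_id)
    exact isOpen_Ioi.preimage hc

end SegAux

/-- every (nonempty) element of the convexity `C_{∪X}` on the space `M_∪X`
of possibility capacities is path connected. -/
theorem convexity_element_path_connected (X : Type u) [TopologicalSpace X]
    [CompactSpace X] [T2Space X]
    (A : Set (Capacity X)) (hA : InConvexU A) (hne : A.Nonempty) :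
    IsPathConnected A := by
  rcases hA with rfl | ⟨_, hcl, hposs, hEq⟩
  · exact absurd hne (by simp)
  obtain ⟨ν₀, hν₀⟩ := hne
  -- membership of segment points
  have mem : ∀ (ν μ : Capacity X), ν ∈ A → μ ∈ A → ∀ t : ℝ, seg ν μ t ∈ A := by
    intro ν μ hν hμ t
    rw [hEq]
    refine ⟨seg_possibility (hposs ν hν) (hposs μ hμ) t, fun F => ?_⟩
    have hbddb : BddBelow ((fun ν : Capacity X => ν.toFun F) '' A) := by
      refine ⟨0, ?_⟩; rintro r ⟨c, _, rfl⟩; exact c.nonneg F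
    have hbdda : BddAbove ((fun ν : Capacity X => ν.toFun F) '' A) := by
      refine ⟨1, ?_⟩; rintro r ⟨c, _, rfl⟩; exact c.le_one F
    constructor
    · exact (csInf_le hbddb (mem_image_of_mem _ hν)).trans (le_max_left _ _)
    · rw [seg_toFun]
      exact max_le (le_csSup hbdda (mem_image_of_mem _ hν))
        ((min_le_left _ _).trans (le_csSup hbdda (mem_image_of_mem _ hμ)))
  have join : ∀ ν μ : Capacity X, ν ∈ A → μ ∈ A → JoinedIn A ν (seg ν μ 1) := by
    intro ν μ hν hμ
    refine ⟨⟨⟨fun s => seg ν μ (s : ℝ),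
      (seg_continuous ν μ).comp continuous_subtype_val⟩, ?_, ?_⟩,
      fun s => mem ν μ hν hμ _⟩
    · show seg ν μ ((0 : unitInterval) : ℝ) = ν
      rw [Set.Icc.coe_zero, seg_zero]
    · rfl
  refine ⟨ν₀, hν₀, ?_⟩
  intro μ hμ
  have h1 := join ν₀ μ hν₀ hμ
  have h2 := join μ ν₀ hμ hν₀
  rw [seg_one_comm μ ν₀] at h2
  exact h1.trans h2.symm
end

section
/- Consider the two-player game on pure strategy sets {a,b} × {a,b} with payoffs u₁(a,a)=1/2, u₁(a,b)=0, u₁(b,a)=0, u₁(b,b)=1/2 and u₂(a,a)=0, u₂(a,b)=1/2, u₂(b,a)=1/2, u₂(b,b)=0, and let ν be the possibility capacity on {a,b} with density [ν](a)=1, [ν](b)=1/2. Then with respect to the product t-norm (multiplication on [0,1]), P₁^·(a, ν) = 1/2, P₁^·(b, ν) = 1/4, hence R₁^·(ν) = {a}, and (ν, ν) is not an equilibrium under uncertainty with respect to the product t-norm. -/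
open Set TopologicalSpace

universe u v

/-- The product t-norm (ordinary multiplication on `[0,1]`). -/
def mulTnorm : Tnorm where
  toFun := (· * ·)
  mem' := fun s hs t ht => ⟨mul_nonneg hs.1 ht.1, mul_le_one₀ hs.2 ht.1 ht.2⟩
  comm' := fun s _ t _ => mul_comm s t
  assoc' := fun s _ t _ r _ => mul_assoc s t r
  mono' := fun _ hs₁ _ _ _ ht₁ _ _ h1 h2 => mul_le_mul h1 h2 ht₁.1 (le_trans hs₁.1 h1)
  one' := fun s _ => mul_one s
lemma Capacity.cval_mono_s12 {X : Type u} [TopologicalSpace X] (ν : Capacity X) {A B : Set X}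
    (h : A ⊆ B) : ν.cval A ≤ ν.cval B :=
  ν.mono' _ _ (closure_mono h)

lemma Capacity.cval_nonneg {X : Type u} [TopologicalSpace X] (ν : Capacity X) (A : Set X) :
    0 ≤ ν.cval A := by
  rw [← ν.empty']; exact ν.mono' _ _ bot_le

lemma Capacity.cval_le_one {X : Type u} [TopologicalSpace X] (ν : Capacity X) (A : Set X) :
    ν.cval A ≤ 1 := by
  rw [← ν.univ']; exact ν.mono' _ _ le_top

lemma Capacity.cval_empty {X : Type u} [TopologicalSpace X] (ν : Capacity X) :
    ν.cval (∅ : Set X) = 0 := by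
  have : (⟨closure (∅ : Set X), isClosed_closure⟩ : Closeds X) = ⊥ := by
    apply SetLike.coe_injective
    simp
  rw [Capacity.cval, this, ν.empty']

/-- Key computation: the product-t-norm integral of a `{1/2, 0}`-valued function on `Bool`
equals `c/2` where `c` is the capacity of the point with value `1/2`. -/
lemma tInt_half_calc (ν : Capacity Bool) (f : Bool → ℝ) (p q : Bool)
    (hpq : ∀ y : Bool, y = p ∨ y = q) (hfp : f p = 1/2) (hfq : f q = 0)
    (c : ℝ) (hc0 : 0 ≤ c) (hνp : ν.cval {p} = c) :
    tInt mulTnorm ν f = c / 2 := by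
  have hne : q ≠ p := by
    intro h; rw [h, hfp] at hfq; norm_num at hfq
  have hpre : ∀ t : ℝ, 0 < t → t ≤ 1/2 → f ⁻¹' Icc t 1 = {p} := by
    intro t ht ht2
    ext y
    rcases hpq y with rfl | rfl
    · simp only [mem_preimage, mem_Icc, hfp, mem_singleton_iff]
      constructor
      · intro _; trivial
      · intro _; constructor <;> linarith
    · simp only [mem_preimage, mem_Icc, hfq, mem_singleton_iff]
      constructor
      · intro h; linarith [h.1]
      · intro h; exact absurd h hne
  have hpre' : ∀ t : ℝ, 1/2 < t → f ⁻¹' Icc t 1 = ∅ := by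
    intro t ht
    ext y
    rcases hpq y with rfl | rfl <;>
      simp only [mem_preimage, mem_Icc, hfp, hfq, mem_empty_iff_false, iff_false, not_and] <;>
      intro h <;> linarith
  set S : Set ℝ := {r : ℝ | ∃ t ∈ Icc (0:ℝ) 1, r = mulTnorm.toFun (ν.cval (f ⁻¹' Icc t 1)) t}
    with hS
  have hb : ∀ r ∈ S, r ≤ c / 2 := by
    rintro r ⟨t, ⟨ht0, ht1⟩, rfl⟩
    show ν.cval (f ⁻¹' Icc t 1) * t ≤ c / 2
    rcases le_or_gt t 0 with h | h
    · have : t = 0 := le_antisymm h ht0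
      rw [this, mul_zero]; linarith
    · rcases le_or_gt t (1/2) with h2 | h2
      · rw [hpre t h h2, hνp]
        calc c * t ≤ c * (1/2) := by
              apply mul_le_mul_of_nonneg_left h2 hc0
          _ = c / 2 := by ring
      · rw [hpre' t h2, ν.cval_empty, zero_mul]; linarith
  have hm : c / 2 ∈ S := by
    refine ⟨1/2, ⟨by norm_num, by norm_num⟩, ?_⟩
    show c / 2 = ν.cval (f ⁻¹' Icc (1/2) 1) * (1/2)
    rw [hpre (1/2) (by norm_num) le_rfl, hνp]; ring
  exact le_antisymm (csSup_le ⟨_, hm⟩ hb) (le_csSup ⟨c / 2, hb⟩ hm)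

/-- in the 2×2 game with `u₁(a,a)=u₁(b,b)=1/2`, `u₁(a,b)=u₁(b,a)=0`,
`u₂(a,a)=u₂(b,b)=0`, `u₂(a,b)=u₂(b,a)=1/2`, for the possibility capacity `ν` with
density `[ν](a)=1`, `[ν](b)=1/2`, and the product t-norm: `P₁(a,ν)=1/2`, `P₁(b,ν)=1/4`,
hence `R₁ = {a}` and `(ν,ν)` is not an equilibrium under uncertainty with respect to
multiplication. -/
theorem example_no_equilibrium_product_tnorm (a b : Bool) (hab : a ≠ b)
    (u₁ u₂ : Bool × Bool → ℝ)
    (hu₁ : u₁ (a, a) = 1/2 ∧ u₁ (a, b) = 0 ∧ u₁ (b, a) = 0 ∧ u₁ (b, b) = 1/2)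
    (hu₂ : u₂ (a, a) = 0 ∧ u₂ (a, b) = 1/2 ∧ u₂ (b, a) = 1/2 ∧ u₂ (b, b) = 0)
    (ν : Capacity Bool) (hν : IsPossibility ν)
    (hνa : ν.cval {a} = 1) (hνb : ν.cval {b} = 1/2) :
    tInt mulTnorm ν (fun y => u₁ (a, y)) = 1/2 ∧
    tInt mulTnorm ν (fun y => u₁ (b, y)) = 1/4 ∧
    {x : Bool | tInt mulTnorm ν (fun y => u₁ (x, y)) =
        sSup (Set.range fun z : Bool => tInt mulTnorm ν (fun y => u₁ (z, y)))} = {a} ∧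
    ¬ (ν.oval ({x : Bool | tInt mulTnorm ν (fun y => u₁ (x, y)) =
          sSup (Set.range fun z : Bool => tInt mulTnorm ν (fun y => u₁ (z, y)))}ᶜ) = 0 ∧
       ν.oval ({y : Bool | tInt mulTnorm ν (fun x => u₂ (x, y)) =
          sSup (Set.range fun w : Bool => tInt mulTnorm ν (fun x => u₂ (x, w)))}ᶜ) = 0) := by
  obtain ⟨h11, h12, h13, h14⟩ := hu₁
  have hmem : ∀ y : Bool, y = a ∨ y = b := by
    intro y; cases a <;> cases b <;> cases y <;> simp_all
  have hba : b ≠ a := fun h => hab h.symm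
  -- P₁(a, ν) = 1/2
  have h1 : tInt mulTnorm ν (fun y => u₁ (a, y)) = 1/2 := by
    have := tInt_half_calc ν (fun y => u₁ (a, y)) a b hmem h11 h12 1 zero_le_one hνa
    rw [this]
  -- P₁(b, ν) = 1/4
  have h2 : tInt mulTnorm ν (fun y => u₁ (b, y)) = 1/4 := by
    have hmem' : ∀ y : Bool, y = b ∨ y = a := fun y => (hmem y).symm
    have := tInt_half_calc ν (fun y => u₁ (b, y)) b a hmem' h14 h13 (1/2) (by norm_num) hνb
    rw [this]; norm_num
  -- sSup of the range is 1/2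
  have hrange : (Set.range fun z : Bool => tInt mulTnorm ν (fun y => u₁ (z, y))) =
      {1/2, 1/4} := by
    ext r
    simp only [Set.mem_range, mem_insert_iff, mem_singleton_iff]
    constructor
    · rintro ⟨z, rfl⟩
      rcases hmem z with rfl | rfl
      · left; exact h1
      · right; exact h2
    · rintro (rfl | rfl)
      · exact ⟨a, h1⟩
      · exact ⟨b, h2⟩
  have hsup : sSup (Set.range fun z : Bool => tInt mulTnorm ν (fun y => u₁ (z, y))) = 1/2 := by
    rw [hrange, csSup_pair]
    norm_num
  -- the best-response set is {a}
  have h3 : {x : Bool | tInt mulTnorm ν (fun y => u₁ (x, y)) =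
      sSup (Set.range fun z : Bool => tInt mulTnorm ν (fun y => u₁ (z, y)))} = {a} := by
    ext x
    simp only [mem_setOf_eq, mem_singleton_iff, hsup]
    rcases hmem x with rfl | rfl
    · simp [h1]
    · rw [h2]
      constructor
      · intro h; norm_num at h
      · intro h; exact absurd h hba
  refine ⟨h1, h2, h3, ?_⟩
  rintro ⟨hcontra, -⟩
  rw [h3] at hcontra
  -- but ν.oval {a}ᶜ ≥ ν({b}) = 1/2 > 0
  have hclosed : IsClosed ({b} : Set Bool) := isClosed_discrete _
  have hKval : ν.toFun ⟨{b}, hclosed⟩ = 1/2 := by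
    have : (⟨{b}, hclosed⟩ : Closeds Bool) = ⟨closure {b}, isClosed_closure⟩ := by
      apply SetLike.coe_injective
      exact (hclosed.closure_eq).symm
    rw [this]; exact hνb
  have hsub : ({b} : Set Bool) ⊆ ({a} : Set Bool)ᶜ := by
    intro y hy
    rw [mem_singleton_iff] at hy
    subst hy
    simp only [mem_compl_iff, mem_singleton_iff]
    exact hba
  have hbdd : BddAbove {r : ℝ | ∃ K : Closeds Bool, (K : Set Bool) ⊆ ({a} : Set Bool)ᶜ ∧
      ν.toFun K = r} := by
    refine ⟨1, ?_⟩
    rintro r ⟨K, -, rfl⟩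
    rw [← ν.univ']
    exact ν.mono' _ _ le_top
  have hge : (1:ℝ)/2 ≤ ν.oval ({a} : Set Bool)ᶜ :=
    le_csSup hbdd ⟨⟨{b}, hclosed⟩, hsub, hKval⟩
  rw [hcontra] at hge
  norm_num at hge
end
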